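/- Let A : X → ℝ be θ-Hölder for some θ ∈ (0,1] and let D ⊆ X be an open set containing Ω(A). Then the set D_A of θ-Hölder sub-actions u for A such that M_A(u) ⊆ D is open and dense in the set of all θ-Hölder sub-actions for A, with respect to the θ-Hölder topology. -/

import Mathlib

open MeasureTheory Filter Topology

section GLT

variable {X : Type*} [MetricSpace X]

/-- A transitive expanding dynamical system: a continuous, surjective, open,
several-to-one map whose inverse branches are uniformly contracting, and which
is topologically transitive. -/
structure IsExpandingTransitive (T : X → X) : Prop where
  cont : Continuous T
  surj : Function.Surjective T
  isOpenMap : IsOpenMap T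
  finite_preimages : ∀ x : X, {y : X | T y = x}.Finite
  transitive : ∀ U V : Set X, IsOpen U → IsOpen V → U.Nonempty → V.Nonempty →
    ∃ n : ℕ, ((T^[n]) ⁻¹' U ∩ V).Nonempty
  contracting : ∃ lam : ℝ, 0 < lam ∧ lam < 1 ∧ ∃ δ : ℝ, 0 < δ ∧
    ∀ x y : X, dist x y ≤ δ → dist x y ≤ lam * dist (T x) (T y)

/-- `Abar` is the ergodic minimizing value of `A`: the minimum (attained) of
`∫ A dμ` over all `T`-invariant Borel probability measures `μ`. -/
def IsErgMinValue [MeasurableSpace X] (T : X → X) (A : X → ℝ) (Abar : ℝ) : Prop :=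
  (∃ μ : Measure X, IsProbabilityMeasure μ ∧ MeasurePreserving T μ μ ∧ (∫ x, A x ∂μ) = Abar) ∧
  ∀ μ : Measure X, IsProbabilityMeasure μ → MeasurePreserving T μ μ → Abar ≤ ∫ x, A x ∂μ

/-- `f` is θ-Hölder. -/
def IsThetaHolder (θ : ℝ) (f : X → ℝ) : Prop :=
  ∃ C : ℝ, 0 ≤ C ∧ ∀ x y : X, |f x - f y| ≤ C * dist x y ^ θ

/-- `u` is a (continuous) sub-action for `A` with ergodic minimizing value `Abar`. -/
def IsSubaction (T : X → X) (A : X → ℝ) (Abar : ℝ) (u : X → ℝ) : Prop :=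
  Continuous u ∧ ∀ x : X, u (T x) - u x + Abar ≤ A x

/-- The contact locus of a sub-action `u`. -/
def contactLocus (T : X → X) (A : X → ℝ) (Abar : ℝ) (u : X → ℝ) : Set X :=
  {x : X | A x = u (T x) - u x + Abar}

/-- The set `Ω(A)` of non-wandering points with respect to `A`. -/
def nonwanderingSet (T : X → X) (A : X → ℝ) (Abar : ℝ) : Set X :=
  {x : X | ∀ ε : ℝ, 0 < ε → ∃ k : ℕ, 1 ≤ k ∧ ∃ y : X,
    dist x y < ε ∧ dist x (T^[k] y) < ε ∧
    |∑ j ∈ Finset.range k, (A (T^[j] y) - Abar)| < ε}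

/-- `u` is a calibrated sub-action: `u x = min_{T y = x} [u y + A y - Abar]`,
the minimum being attained. -/
def IsCalibrated (T : X → X) (A : X → ℝ) (Abar : ℝ) (u : X → ℝ) : Prop :=
  Continuous u ∧ ∀ x : X,
    (∀ y : X, T y = x → u x ≤ u y + A y - Abar) ∧
    (∃ y : X, T y = x ∧ u x = u y + A y - Abar)

/-- `S_A^ε(x, x', k)`: infimum of Birkhoff sums of `A - Abar` over orbit segments of
length `k` starting within `ε` of `x` and ending within `ε` of `x'`
(`sInf ∅ = ⊤` in `EReal`). -/
noncomputable def birkhoffInf (T : X → X) (A : X → ℝ) (Abar : ℝ) (ε : ℝ) (x x' : X)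
    (k : ℕ) : EReal :=
  sInf {v : EReal | ∃ z : X, dist z x < ε ∧ dist (T^[k] z) x' < ε ∧
    v = ((∑ j ∈ Finset.range k, (A (T^[j] z) - Abar) : ℝ) : EReal)}

/-- The Mañé potential `φ_A(x, x') = lim_{ε→0} inf_{k ≥ 1} S_A^ε(x, x', k)`;
since the quantity is nonincreasing in `ε`, the limit as `ε → 0` is the
supremum over `ε > 0`. -/
noncomputable def manePotential (T : X → X) (A : X → ℝ) (Abar : ℝ) (x x' : X) : EReal :=
  ⨆ ε : {e : ℝ // 0 < e}, ⨅ k : {n : ℕ // 1 ≤ n}, birkhoffInf T A Abar ε.1 x x' k.1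

/-- The Peierls barrier `h_A(x, x') = lim_{ε→0} liminf_{k→∞} S_A^ε(x, x', k)`;
since the quantity is nonincreasing in `ε`, the limit as `ε → 0` is the
supremum over `ε > 0`. -/
noncomputable def peierlsBarrier (T : X → X) (A : X → ℝ) (Abar : ℝ) (x x' : X) : EReal :=
  ⨆ ε : {e : ℝ // 0 < e},
    Filter.liminf (fun k : ℕ => birkhoffInf T A Abar ε.1 x x' k) Filter.atTop

/-- `C` is an irreducible component of `Ω(A)`: an equivalence class of the
relation `x ∼ x' ↔ h_A(x, x') + h_A(x', x) = 0` on `Ω(A)`. -/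
def IsIrredComponent (T : X → X) (A : X → ℝ) (Abar : ℝ) (C : Set X) : Prop :=
  ∃ x ∈ nonwanderingSet T A Abar, C = {y ∈ nonwanderingSet T A Abar |
    peierlsBarrier T A Abar x y + peierlsBarrier T A Abar y x = 0}

/-- The θ-Hölder norm `‖f‖_θ = sup |f| + sup_{x ≠ y} |f x - f y| / d(x,y)^θ`. -/
noncomputable def holderNorm (θ : ℝ) (f : X → ℝ) : ℝ :=
  (⨆ x : X, |f x|) +
    ⨆ p : {p : X × X // p.1 ≠ p.2}, |f p.1.1 - f p.1.2| / dist p.1.1 p.1.2 ^ θ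

end GLT

/-!
The gap `A - (u ∘ T - u + Abar)` of a sub-action `u` is continuous, so on the compact set `Dᶜ`
it is bounded below by some `m > 0` once `M_A(u) ⊆ D`, and a perturbation of `u` that is smaller
than `m / 2` in sup norm keeps it positive there: this is openness.

For density it suffices to find one θ-Hölder sub-action `w` whose gap is positive on `Dᶜ`,
since `(1 - t) u + t w` is then a sub-action close to `u` whose contact locus lies in `D`.
For a single point `x₀ ∉ Ω(A)` one adds to `u` the truncation `min (H x) c` of the cost `H x`
of reaching `x`: the least Birkhoff sum of the gap of `u` along an orbit segment ending at `x`,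
plus a penalty of up to `c` for starting far from `x₀`. Since `x₀` is wandering, `H x₀ ≥ c`,
while `H (T x₀)` is at most the gap at `x₀`; uniformly contracting inverse branches let one
shadow any orbit segment ending at `x` by one ending at a nearby `x'`, which makes `H` locally
θ-Hölder. Compactness of `Dᶜ` and convex combinations pass from points to all of `Dᶜ`.
-/

open Filter Topology Finset

section Holder

variable {X : Type*} [MetricSpace X] {θ : ℝ} {f g : X → ℝ}

theorem IsThetaHolder.continuous (hθ : 0 < θ) (hf : IsThetaHolder θ f) : Continuous f := by
  obtain ⟨C, -, hC⟩ := hf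
  refine continuous_iff_continuousAt.2 fun y => tendsto_iff_dist_tendsto_zero.2 ?_
  have hlim : Tendsto (fun x => C * dist x y ^ θ) (𝓝 y) (𝓝 (C * dist y y ^ θ)) :=
    (((continuous_id.dist continuous_const).rpow_const fun _ => Or.inr hθ.le).const_mul
      C).tendsto y
  rw [dist_self, Real.zero_rpow hθ.ne', mul_zero] at hlim
  exact squeeze_zero (fun _ => dist_nonneg) (fun x => (Real.dist_eq _ _).trans_le (hC x y)) hlim

theorem IsThetaHolder.add (hf : IsThetaHolder θ f) (hg : IsThetaHolder θ g) :
    IsThetaHolder θ (fun x => f x + g x) := by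
  obtain ⟨C, hC, hf⟩ := hf
  obtain ⟨C', hC', hg⟩ := hg
  refine ⟨C + C', add_nonneg hC hC', fun x y => ?_⟩
  calc |f x + g x - (f y + g y)| = |(f x - f y) + (g x - g y)| := by ring_nf
    _ ≤ |f x - f y| + |g x - g y| := abs_add_le _ _
    _ ≤ (C + C') * dist x y ^ θ := by rw [add_mul]; exact add_le_add (hf x y) (hg x y)

theorem IsThetaHolder.const_mul (hf : IsThetaHolder θ f) (a : ℝ) :
    IsThetaHolder θ (fun x => a * f x) := by
  obtain ⟨C, hC, hf⟩ := hf
  refine ⟨|a| * C, mul_nonneg (abs_nonneg a) hC, fun x y => ?_⟩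
  rw [← mul_sub, abs_mul, mul_assoc]
  exact mul_le_mul_of_nonneg_left (hf x y) (abs_nonneg a)

theorem isThetaHolder_of_le_add (hθ : 0 ≤ θ) {ρ C c : ℝ} (hρ : 0 < ρ) (hC : 0 ≤ C)
    (hosc : ∀ x y, |f x - f y| ≤ c)
    (hloc : ∀ x y, dist x y < ρ → f y ≤ f x + C * dist x y ^ θ) : IsThetaHolder θ f := by
  refine ⟨max C (c / ρ ^ θ), le_max_of_le_left hC, fun x y => ?_⟩
  have hdθ : 0 ≤ dist x y ^ θ := Real.rpow_nonneg dist_nonneg θ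
  rcases lt_or_ge (dist x y) ρ with hxy | hxy
  · have h₁ := hloc x y hxy
    have h₂ := hloc y x (by rwa [dist_comm])
    rw [dist_comm y x] at h₂
    calc |f x - f y| ≤ C * dist x y ^ θ := abs_sub_le_iff.2 ⟨by linarith, by linarith⟩
      _ ≤ max C (c / ρ ^ θ) * dist x y ^ θ := by gcongr; exact le_max_left _ _
  · have hρθ : 0 < ρ ^ θ := Real.rpow_pos_of_pos hρ θ
    have hc : 0 ≤ c / ρ ^ θ := div_nonneg ((abs_nonneg _).trans (hosc x y)) hρθ.le
    calc |f x - f y| ≤ c := hosc x y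
      _ = c / ρ ^ θ * ρ ^ θ := (div_mul_cancel₀ c hρθ.ne').symm
      _ ≤ c / ρ ^ θ * dist x y ^ θ :=
          mul_le_mul_of_nonneg_left (Real.rpow_le_rpow hρ.le hxy hθ) hc
      _ ≤ max C (c / ρ ^ θ) * dist x y ^ θ := by gcongr; exact le_max_right _ _

theorem holderNorm_nonneg (θ : ℝ) (f : X → ℝ) : 0 ≤ holderNorm θ f :=
  add_nonneg (Real.iSup_nonneg fun _ => abs_nonneg _)
    (Real.iSup_nonneg fun _ => div_nonneg (abs_nonneg _) (Real.rpow_nonneg dist_nonneg _))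

theorem abs_le_holderNorm (θ : ℝ) (hf : BddAbove (Set.range fun x => |f x|)) (x : X) :
    |f x| ≤ holderNorm θ f :=
  le_add_of_le_of_nonneg (le_ciSup hf x)
    (Real.iSup_nonneg fun _ => div_nonneg (abs_nonneg _) (Real.rpow_nonneg dist_nonneg _))

theorem holderNorm_const_mul (θ : ℝ) {t : ℝ} (ht : 0 ≤ t) (f : X → ℝ) :
    holderNorm θ (fun x => t * f x) = t * holderNorm θ f := by
  simp only [holderNorm, ← mul_sub, abs_mul, abs_of_nonneg ht, mul_div_assoc, mul_add,
    Real.mul_iSup_of_nonneg ht]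

end Holder

theorem min_le_min_add_of_le {α : Type*} [AddCommGroup α] [LinearOrder α] [IsOrderedAddMonoid α]
    {a b c e : α} (h : a ≤ b + e) (he : 0 ≤ e) : min a c ≤ min b c + e := by
  rw [← min_add_add_right]
  exact min_le_min h (le_add_of_nonneg_right he)

section Gap

variable {X : Type*} {T : X → X} {A : X → ℝ} {Abar : ℝ} {u w : X → ℝ}

def subactionGap (T : X → X) (A : X → ℝ) (Abar : ℝ) (u : X → ℝ) (x : X) : ℝ :=
  A x - (u (T x) - u x + Abar)

theorem mem_contactLocus_iff {x : X} :
    x ∈ contactLocus T A Abar u ↔ subactionGap T A Abar u x = 0 :=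
  sub_eq_zero.symm

theorem contactLocus_subset_of_subactionGap_pos {D : Set X}
    (h : ∀ x ∉ D, 0 < subactionGap T A Abar u x) : contactLocus T A Abar u ⊆ D :=
  fun x hx => by_contra fun hxD => (h x hxD).ne' (mem_contactLocus_iff.1 hx)

theorem subactionGap_add_apply (h : X → ℝ) (x : X) :
    subactionGap T A Abar (fun y => u y + h y) x = subactionGap T A Abar u x - (h (T x) - h x) := by
  simp only [subactionGap]; ring

theorem subactionGap_convexCombination (t : ℝ) (x : X) :
    subactionGap T A Abar (fun y => (1 - t) * u y + t * w y) x =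
      (1 - t) * subactionGap T A Abar u x + t * subactionGap T A Abar w x := by
  simp only [subactionGap]; ring

theorem birkhoffSum_subactionGap (k : ℕ) (z : X) :
    birkhoffSum T (subactionGap T A Abar u) k z =
      birkhoffSum T (fun x => A x - Abar) k z - (u (T^[k] z) - u z) := by
  induction k with
  | zero => simp
  | succ k ih =>
    rw [birkhoffSum_succ, birkhoffSum_succ, ih, Function.iterate_succ_apply']
    simp only [subactionGap]; ring

end Gap

section Subaction

variable {X : Type*} [MetricSpace X] {T : X → X} {A : X → ℝ} {Abar : ℝ} {u w : X → ℝ}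

theorem isSubaction_iff :
    IsSubaction T A Abar u ↔ Continuous u ∧ ∀ x, 0 ≤ subactionGap T A Abar u x := by
  simp only [IsSubaction, subactionGap, sub_nonneg]

theorem continuous_subactionGap (hT : Continuous T) (hA : Continuous A) (hu : Continuous u) :
    Continuous (subactionGap T A Abar u) :=
  hA.sub (((hu.comp hT).sub hu).add continuous_const)

theorem IsSubaction.convexCombination (hu : IsSubaction T A Abar u) (hw : IsSubaction T A Abar w)
    {t : ℝ} (ht0 : 0 ≤ t) (ht1 : t ≤ 1) :
    IsSubaction T A Abar (fun y => (1 - t) * u y + t * w y) := by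
  rw [isSubaction_iff] at hu hw ⊢
  refine ⟨(continuous_const.mul hu.1).add (continuous_const.mul hw.1), fun x => ?_⟩
  rw [subactionGap_convexCombination]
  exact add_nonneg (mul_nonneg (sub_nonneg.2 ht1) (hu.2 x)) (mul_nonneg ht0 (hw.2 x))

theorem subactionGap_convexCombination_pos (hu : IsSubaction T A Abar u)
    (hw : IsSubaction T A Abar w) {t : ℝ} (ht0 : 0 < t) (ht1 : t < 1) {x : X}
    (hx : 0 < subactionGap T A Abar u x ∨ 0 < subactionGap T A Abar w x) :
    0 < subactionGap T A Abar (fun y => (1 - t) * u y + t * w y) x := by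
  have hu := (isSubaction_iff.1 hu).2 x
  have hw := (isSubaction_iff.1 hw).2 x
  rw [subactionGap_convexCombination]
  rcases hx with hx | hx
  · exact add_pos_of_pos_of_nonneg (mul_pos (sub_pos.2 ht1) hx) (mul_nonneg ht0.le hw)
  · exact add_pos_of_nonneg_of_pos (mul_nonneg (sub_pos.2 ht1).le hu) (mul_pos ht0 hx)

theorem exists_contactLocus_subset_of_holderNorm_sub_lt [CompactSpace X] (θ : ℝ)
    (hT : Continuous T) (hA : Continuous A) (hu : IsSubaction T A Abar u) {D : Set X}
    (hD : IsOpen D) (huD : contactLocus T A Abar u ⊆ D) :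
    ∃ ε > 0, ∀ v : X → ℝ, Continuous v → holderNorm θ (fun x => v x - u x) < ε →
      contactLocus T A Abar v ⊆ D := by
  have hpos : ∀ x ∈ Dᶜ, 0 < subactionGap T A Abar u x := fun x hx =>
    ((isSubaction_iff.1 hu).2 x).lt_of_ne' fun h => hx (huD (mem_contactLocus_iff.2 h))
  obtain ⟨m, hm, hmD⟩ := hD.isClosed_compl.isCompact.exists_forall_le'
    (continuous_subactionGap hT hA hu.1).continuousOn hpos
  refine ⟨m / 2, half_pos hm, fun v hv hvu =>
    contactLocus_subset_of_subactionGap_pos fun x hx => ?_⟩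
  have hsmall : ∀ y, |v y - u y| < m / 2 := fun y =>
    (abs_le_holderNorm θ (isCompact_range (hv.sub hu.1).abs).bddAbove y).trans_lt hvu
  have hgap : subactionGap T A Abar v x =
      subactionGap T A Abar u x - ((v (T x) - u (T x)) - (v x - u x)) := by
    simp only [subactionGap]; ring
  have h₁ := abs_lt.1 (hsmall (T x))
  have h₂ := abs_lt.1 (hsmall x)
  linarith [hmD x hx]

theorem exists_le_birkhoffSum_subactionGap (hu : IsSubaction T A Abar u) {x₀ : X}
    (hx₀ : x₀ ∉ nonwanderingSet T A Abar) :
    ∃ c > 0, ∃ r > 0, ∀ k, 1 ≤ k → ∀ z, T^[k] z = x₀ → dist z x₀ < r →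
      c ≤ birkhoffSum T (subactionGap T A Abar u) k z := by
  simp only [nonwanderingSet, Set.mem_ofPred_eq] at hx₀
  push Not at hx₀
  obtain ⟨ε, hε, hwander⟩ := hx₀
  obtain ⟨r, hr, hur⟩ := Metric.continuous_iff.1 hu.1 x₀ (ε / 2) (half_pos hε)
  refine ⟨ε / 2, half_pos hε, min r ε, lt_min hr hε, fun k hk z hz hzx₀ => ?_⟩
  have hsum : ε ≤ |birkhoffSum T (fun x => A x - Abar) k z| :=
    hwander k hk z (by rw [dist_comm]; exact hzx₀.trans_le (min_le_right _ _))
      (by rw [hz, dist_self]; exact hε)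
  have hgap := birkhoffSum_subactionGap (T := T) (A := A) (Abar := Abar) (u := u) k z
  have hgap0 : 0 ≤ birkhoffSum T (subactionGap T A Abar u) k z :=
    sum_nonneg fun j _ => (isSubaction_iff.1 hu).2 _
  have huz := abs_lt.1 (hur z (hzx₀.trans_le (min_le_left _ _)))
  rw [hz] at hgap
  rcases le_abs'.1 hsum with h | h <;> linarith

theorem exists_holderNorm_sub_lt_of_subactionGap_pos {θ : ℝ} (hu : IsThetaHolder θ u)
    (hus : IsSubaction T A Abar u) (hw : IsThetaHolder θ w) (hws : IsSubaction T A Abar w)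
    {D : Set X} (hwD : ∀ x ∉ D, 0 < subactionGap T A Abar w x) {ε : ℝ} (hε : 0 < ε) :
    ∃ v : X → ℝ, IsThetaHolder θ v ∧ IsSubaction T A Abar v ∧
      contactLocus T A Abar v ⊆ D ∧ holderNorm θ (fun x => v x - u x) < ε := by
  obtain ⟨t, ht0, ht1, htε⟩ :
      ∃ t, 0 < t ∧ t < 1 ∧ t * holderNorm θ (fun x => w x - u x) < ε := by
    obtain ⟨s, hs, hsε⟩ := exists_pos_mul_lt hε (holderNorm θ fun x => w x - u x)
    refine ⟨min s (1 / 2), lt_min hs one_half_pos,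
      (min_le_right _ _).trans_lt one_half_lt_one, ?_⟩
    rw [mul_comm] at hsε
    exact (mul_le_mul_of_nonneg_right (min_le_left _ _) (holderNorm_nonneg _ _)).trans_lt hsε
  refine ⟨fun x => (1 - t) * u x + t * w x, (hu.const_mul _).add (hw.const_mul _),
    hus.convexCombination hws ht0.le ht1.le, contactLocus_subset_of_subactionGap_pos
      fun x hx => subactionGap_convexCombination_pos hus hws ht0 ht1 (Or.inr (hwD x hx)), ?_⟩
  have hvu : (fun x => (1 - t) * u x + t * w x - u x) = fun x => t * (w x - u x) := by
    funext x; ring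
  rwa [hvu, holderNorm_const_mul θ ht0.le]

end Subaction

section InverseBranches

variable {X : Type*} [MetricSpace X] {T : X → X} {lam ρ : ℝ}

def HasContractingInverseBranches (T : X → X) (lam ρ : ℝ) : Prop :=
  ∀ b a, dist (T b) a < ρ → ∃ b', T b' = a ∧ dist b b' ≤ lam * dist (T b) a

theorem exists_hasContractingInverseBranches [CompactSpace X] (hc : Continuous T)
    (ho : IsOpenMap T) {δ : ℝ} (hδ : 0 < δ)
    (hcontr : ∀ x y, dist x y ≤ δ → dist x y ≤ lam * dist (T x) (T y)) :
    ∃ ρ > 0, HasContractingInverseBranches T lam ρ := by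
  -- the radius is a parameter tending to `0` (vacuous when `≤ 0`), so that compactness of `X`
  -- turns the pointwise choice of a radius into a uniform one
  have hloc : ∀ y ∈ (Set.univ : Set X), ∀ᶠ p : ℝ × X in 𝓝 (0, y),
      ∀ a, dist (T p.2) a < p.1 →
        ∃ b', T b' = a ∧ dist p.2 b' ≤ lam * dist (T p.2) a := by
    intro y _
    obtain ⟨r, hr, hball⟩ := Metric.isOpen_iff.1 (ho _ (Metric.isOpen_ball (x := y)
      (ε := δ / 2))) (T y) ⟨y, Metric.mem_ball_self (half_pos hδ), rfl⟩
    obtain ⟨η, hη, hTη⟩ := Metric.continuous_iff.1 hc y (r / 2) (half_pos hr)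
    filter_upwards [prod_mem_nhds (Iio_mem_nhds (half_pos hr))
      (Metric.ball_mem_nhds y (lt_min hη (half_pos hδ)))] with p ⟨hρ, hb⟩ a ha
    have hb : dist p.2 y < min η (δ / 2) := hb
    have hay : dist a (T y) < r := calc
      dist a (T y) ≤ dist (T p.2) a + dist (T p.2) (T y) := dist_triangle_left _ _ _
      _ < r / 2 + r / 2 := add_lt_add (ha.trans hρ) (hTη _ (hb.trans_le (min_le_left _ _)))
      _ = r := add_halves r
    obtain ⟨b', hb'y, rfl⟩ := hball hay
    refine ⟨b', rfl, hcontr _ _ ?_⟩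
    calc dist p.2 b' ≤ dist p.2 y + dist b' y := dist_triangle_right _ _ _
      _ ≤ δ / 2 + δ / 2 :=
          add_le_add (hb.le.trans (min_le_right _ _)) (Metric.mem_ball.1 hb'y).le
      _ = δ := add_halves δ
  obtain ⟨ρ, hρ, hρP⟩ := (isCompact_univ.eventually_forall_of_forall_eventually
    (P := fun ρ b => ∀ a, dist (T b) a < ρ →
      ∃ b', T b' = a ∧ dist b b' ≤ lam * dist (T b) a) hloc).exists_gt
  exact ⟨ρ, hρ, fun b => hρP b (Set.mem_univ b)⟩

theorem HasContractingInverseBranches.exists_iterate_preimage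
    (hlift : HasContractingInverseBranches T lam ρ) (hlam0 : 0 ≤ lam) (hlam1 : lam ≤ 1)
    (k : ℕ) (z a : X) (ha : dist (T^[k] z) a < ρ) :
    ∃ z', T^[k] z' = a ∧
      ∀ j ≤ k, dist (T^[j] z) (T^[j] z') ≤ lam ^ (k - j) * dist (T^[k] z) a := by
  induction k generalizing a with
  | zero => exact ⟨a, rfl, fun j hj => by simp [Nat.le_zero.1 hj]⟩
  | succ k ih =>
    rw [Function.iterate_succ_apply'] at ha ⊢
    obtain ⟨y, rfl, hy⟩ := hlift _ a ha
    obtain ⟨z', rfl, hz'⟩ :=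
      ih _ (hy.trans_lt ((mul_le_of_le_one_left dist_nonneg hlam1).trans_lt ha))
    refine ⟨z', Function.iterate_succ_apply' T k z', fun j hj => ?_⟩
    rcases hj.lt_or_eq with hj | rfl
    · calc dist (T^[j] z) (T^[j] z') ≤ lam ^ (k - j) * dist (T^[k] z) (T^[k] z') :=
            hz' j (Nat.lt_succ_iff.1 hj)
        _ ≤ lam ^ (k - j) * (lam * dist (T (T^[k] z)) (T (T^[k] z'))) := by gcongr
        _ = lam ^ (k + 1 - j) * dist (T (T^[k] z)) (T (T^[k] z')) := by
            rw [Nat.sub_add_comm (Nat.lt_succ_iff.1 hj), pow_succ]; ring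
    · simp only [Nat.sub_self, pow_zero, one_mul, Function.iterate_succ_apply', le_refl]

theorem abs_birkhoffSum_sub_le_of_shadow {θ CA d : ℝ} {A : X → ℝ} {k : ℕ} {z z' : X}
    (hθ : 0 ≤ θ) (hlam : 0 ≤ lam) (hq : lam ^ θ < 1) (hCA : 0 ≤ CA)
    (hA : ∀ x y, |A x - A y| ≤ CA * dist x y ^ θ) (hd : 0 ≤ d)
    (hzz' : ∀ j ≤ k, dist (T^[j] z) (T^[j] z') ≤ lam ^ (k - j) * d) :
    |birkhoffSum T A k z - birkhoffSum T A k z'| ≤ CA * (1 - lam ^ θ)⁻¹ * d ^ θ := by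
  set q := lam ^ θ
  have hq0 : 0 ≤ q := Real.rpow_nonneg hlam θ
  have hterm : ∀ j ∈ range k, |A (T^[j] z) - A (T^[j] z')| ≤ CA * d ^ θ * q ^ (k - j) := by
    intro j hj
    calc |A (T^[j] z) - A (T^[j] z')| ≤ CA * dist (T^[j] z) (T^[j] z') ^ θ := hA _ _
      _ ≤ CA * (lam ^ (k - j) * d) ^ θ := by gcongr; exact hzz' j (mem_range.1 hj).le
      _ = CA * d ^ θ * q ^ (k - j) := by
          rw [Real.mul_rpow (pow_nonneg hlam _) hd, ← Real.rpow_pow_comm hlam]; ring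
  have hgeom : ∑ j ∈ range k, q ^ (k - j) ≤ (1 - q)⁻¹ := calc
    ∑ j ∈ range k, q ^ (k - j) = ∑ j ∈ range k, q ^ (k - 1 - j + 1) :=
        sum_congr rfl fun j hj => by rw [mem_range] at hj; congr 1; omega
    _ = ∑ j ∈ range k, q ^ (j + 1) := sum_range_reflect (fun j => q ^ (j + 1)) k
    _ ≤ ∑ j ∈ range k, q ^ j :=
        sum_le_sum fun j _ => pow_le_pow_of_le_one hq0 hq.le (Nat.le_succ j)
    _ = ∑ j ∈ Ico 0 k, q ^ j := by rw [range_eq_Ico]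
    _ ≤ q ^ 0 / (1 - q) := geom_sum_Ico_le_of_lt_one hq0 hq
    _ = (1 - q)⁻¹ := by rw [pow_zero, one_div]
  calc |birkhoffSum T A k z - birkhoffSum T A k z'|
      = |∑ j ∈ range k, (A (T^[j] z) - A (T^[j] z'))| := by
        rw [birkhoffSum, birkhoffSum, sum_sub_distrib]
    _ ≤ ∑ j ∈ range k, CA * d ^ θ * q ^ (k - j) :=
        (abs_sum_le_sum_abs _ _).trans (sum_le_sum hterm)
    _ = CA * d ^ θ * ∑ j ∈ range k, q ^ (k - j) := (mul_sum _ _ _).symm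
    _ ≤ CA * d ^ θ * (1 - q)⁻¹ := by gcongr
    _ = CA * (1 - q)⁻¹ * d ^ θ := by ring

end InverseBranches

section ReachCost

variable {α : Type*} {T : α → α} {g Φ : α → ℝ} {x x' z : α} {k : ℕ}

noncomputable def reachCost (T : α → α) (g Φ : α → ℝ) (x : α) : ℝ :=
  sInf {v | ∃ k, 1 ≤ k ∧ ∃ z, T^[k] z = x ∧ v = birkhoffSum T g k z + Φ z}

theorem reachCost_le (hg : ∀ x, 0 ≤ g x) (hΦ : ∀ x, 0 ≤ Φ x) (hk : 1 ≤ k)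
    (hz : T^[k] z = x) : reachCost T g Φ x ≤ birkhoffSum T g k z + Φ z :=
  csInf_le ⟨0, by
    rintro _ ⟨k, -, z, -, rfl⟩
    exact add_nonneg (sum_nonneg fun j _ => hg _) (hΦ z)⟩ ⟨k, hk, z, hz, rfl⟩

theorem le_reachCost (hT : Function.Surjective T) {c : ℝ}
    (h : ∀ k, 1 ≤ k → ∀ z, T^[k] z = x → c ≤ birkhoffSum T g k z + Φ z) :
    c ≤ reachCost T g Φ x := by
  obtain ⟨z, hz⟩ := hT x
  refine le_csInf ⟨_, 1, le_rfl, z, hz, rfl⟩ ?_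
  rintro _ ⟨k, hk, z, hz, rfl⟩
  exact h k hk z hz

theorem reachCost_nonneg (hT : Function.Surjective T) (hg : ∀ x, 0 ≤ g x)
    (hΦ : ∀ x, 0 ≤ Φ x) (x : α) : 0 ≤ reachCost T g Φ x :=
  le_reachCost hT fun _ _ z _ => add_nonneg (sum_nonneg fun _ _ => hg _) (hΦ z)

theorem reachCost_le_add (hT : Function.Surjective T) (hg : ∀ x, 0 ≤ g x)
    (hΦ : ∀ x, 0 ≤ Φ x) {E : ℝ}
    (h : ∀ k, 1 ≤ k → ∀ z, T^[k] z = x → ∃ z', T^[k] z' = x' ∧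
      birkhoffSum T g k z' + Φ z' ≤ birkhoffSum T g k z + Φ z + E) :
    reachCost T g Φ x' ≤ reachCost T g Φ x + E := by
  rw [← sub_le_iff_le_add]
  refine le_reachCost hT fun k hk z hz => ?_
  obtain ⟨z', hz', hle⟩ := h k hk z hz
  linarith [reachCost_le hg hΦ hk hz']

theorem reachCost_apply_le (hT : Function.Surjective T) (hg : ∀ x, 0 ≤ g x)
    (hΦ : ∀ x, 0 ≤ Φ x) (x : α) : reachCost T g Φ (T x) ≤ reachCost T g Φ x + g x := by
  rw [← sub_le_iff_le_add]
  refine le_reachCost hT fun k hk z hz => ?_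
  have hz' : T^[k + 1] z = T x := by rw [Function.iterate_succ_apply', hz]
  have := reachCost_le hg hΦ (Nat.le_succ_of_le hk) hz'
  rw [birkhoffSum_succ, hz] at this
  linarith

end ReachCost

section Penalty

variable {X : Type*} [MetricSpace X]

theorem abs_min_mul_dist_sub_le (c : ℝ) {β : ℝ} (hβ : 0 ≤ β) (x₀ z z' : X) :
    |min c (β * dist z x₀) - min c (β * dist z' x₀)| ≤ β * dist z z' := by
  refine (abs_min_sub_min_le_max _ _ _ _).trans (max_le ?_ ?_)
  · rw [sub_self, abs_zero]; positivity
  · rw [← mul_sub, abs_mul, abs_of_nonneg hβ]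
    exact mul_le_mul_of_nonneg_left (abs_dist_sub_le z z' x₀) hβ

theorem le_reachCost_min_mul_dist {T : X → X} (hT : Function.Surjective T) {g : X → ℝ}
    (hg : ∀ x, 0 ≤ g x) {x₀ : X} {c r : ℝ} (hc : 0 ≤ c) (hr : 0 < r)
    (hcr : ∀ k, 1 ≤ k → ∀ z, T^[k] z = x₀ → dist z x₀ < r →
      c ≤ birkhoffSum T g k z) :
    c ≤ reachCost T g (fun z => min c (c / r * dist z x₀)) x₀ := by
  refine le_reachCost hT fun k hk z hz => ?_
  rcases lt_or_ge (dist z x₀) r with hzr | hzr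
  · exact (hcr k hk z hz hzr).trans (le_add_of_nonneg_right (le_min hc (by positivity)))
  · have hΦz : min c (c / r * dist z x₀) = c := min_eq_left <| by
      rw [div_mul_eq_mul_div, le_div_iff₀ hr]; exact mul_le_mul_of_nonneg_left hzr hc
    rw [hΦz]
    exact le_add_of_nonneg_left (sum_nonneg fun j _ => hg _)

end Penalty

section StrictSubaction

variable {X : Type*} [MetricSpace X] [CompactSpace X] {T : X → X} {θ : ℝ} {A u : X → ℝ}
  {Abar : ℝ}

theorem exists_reachCost_subactionGap_le_add (hT : IsExpandingTransitive T) (hθ0 : 0 < θ)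
    (hθ1 : θ ≤ 1) (hA : IsThetaHolder θ A) (hu : IsThetaHolder θ u)
    (hus : IsSubaction T A Abar u) {Φ : X → ℝ} {β : ℝ} (hβ : 0 ≤ β)
    (hΦ0 : ∀ x, 0 ≤ Φ x) (hΦ : ∀ x y, |Φ x - Φ y| ≤ β * dist x y) :
    ∃ ρ > 0, ∃ C ≥ 0, ∀ x x', dist x x' < ρ →
      reachCost T (subactionGap T A Abar u) Φ x' ≤
        reachCost T (subactionGap T A Abar u) Φ x + C * dist x x' ^ θ := by
  obtain ⟨CA, hCA, hA⟩ := hA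
  obtain ⟨Cu, hCu, hu⟩ := hu
  obtain ⟨lam, hlam0, hlam1, δ, hδ, hcontr⟩ := hT.contracting
  obtain ⟨ρ, hρ, hlift⟩ :=
    exists_hasContractingInverseBranches hT.cont hT.isOpenMap hδ hcontr
  have hq : lam ^ θ < 1 := Real.rpow_lt_one hlam0.le hlam1 hθ0
  have hq' : 0 ≤ (1 - lam ^ θ)⁻¹ := inv_nonneg.2 (sub_nonneg.2 hq.le)
  refine ⟨min ρ 1, lt_min hρ one_pos, CA * (1 - lam ^ θ)⁻¹ + 2 * Cu + β, by positivity,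
    fun x x' hxx' => reachCost_le_add hT.surj (isSubaction_iff.1 hus).2 hΦ0 fun k hk z hz => ?_⟩
  set d := dist x x'
  have hdθ : d ≤ d ^ θ :=
    Real.self_le_rpow_of_le_one dist_nonneg (hxx'.le.trans (min_le_right _ _)) hθ1
  obtain ⟨z', hz', hzz'⟩ := hlift.exists_iterate_preimage hlam0.le hlam1.le k z x'
    (by rw [hz]; exact hxx'.trans_le (min_le_left _ _))
  rw [hz] at hzz'
  have hz₀ : dist z z' ≤ d := by
    simpa using (hzz' 0 k.zero_le).trans
      (mul_le_of_le_one_left dist_nonneg (pow_le_one₀ hlam0.le hlam1.le))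
  have hsum := abs_birkhoffSum_sub_le_of_shadow (A := fun y => A y - Abar) hθ0.le hlam0.le hq hCA
    (by simpa using hA) dist_nonneg hzz'
  have hux := abs_le.1 (hu x x')
  have huz := abs_le.1 ((hu z z').trans (by gcongr : Cu * dist z z' ^ θ ≤ Cu * d ^ θ))
  have hΦz := abs_le.1 ((hΦ z z').trans
    (by gcongr; exact hz₀.trans hdθ : β * dist z z' ≤ β * d ^ θ))
  refine ⟨z', hz', ?_⟩
  rw [birkhoffSum_subactionGap, birkhoffSum_subactionGap, hz, hz']
  have hexp : (CA * (1 - lam ^ θ)⁻¹ + 2 * Cu + β) * d ^ θ =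
      CA * (1 - lam ^ θ)⁻¹ * d ^ θ + 2 * (Cu * d ^ θ) + β * d ^ θ := by ring
  linarith [(abs_le.1 hsum).1]

theorem exists_isSubaction_subactionGap_pos (hT : IsExpandingTransitive T) (hθ0 : 0 < θ)
    (hθ1 : θ ≤ 1) (hA : IsThetaHolder θ A) (hu : IsThetaHolder θ u)
    (hus : IsSubaction T A Abar u) {x₀ : X} (hx₀ : x₀ ∉ nonwanderingSet T A Abar) :
    ∃ w, IsThetaHolder θ w ∧ IsSubaction T A Abar w ∧ 0 < subactionGap T A Abar w x₀ := by
  set g := subactionGap T A Abar u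
  have hg : ∀ x, 0 ≤ g x := (isSubaction_iff.1 hus).2
  obtain ⟨c, hc, r, hr, hcr⟩ := exists_le_birkhoffSum_subactionGap hus hx₀
  set Φ : X → ℝ := fun z => min c (c / r * dist z x₀)
  have hΦ0 : ∀ z, 0 ≤ Φ z := fun z => le_min hc.le (by positivity)
  set H := reachCost T g Φ
  have hHx₀ : c ≤ H x₀ := le_reachCost_min_mul_dist hT.surj hg hc.le hr hcr
  have hHTx₀ : H (T x₀) ≤ g x₀ := by
    simpa [Φ, min_eq_right hc.le] using
      reachCost_le (T := T) hg hΦ0 le_rfl (rfl : T^[1] x₀ = T x₀)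
  -- truncating at `c` keeps the jump at `x₀` and bounds the oscillation of `H`
  set h : X → ℝ := fun x => min (H x) c
  have hh0 : ∀ x, 0 ≤ h x := fun x => le_min (reachCost_nonneg hT.surj hg hΦ0 x) hc.le
  have hh : IsThetaHolder θ h := by
    obtain ⟨ρ, hρ, C, hC, hloc⟩ :=
      exists_reachCost_subactionGap_le_add hT hθ0 hθ1 hA hu hus (div_pos hc hr).le hΦ0
        (abs_min_mul_dist_sub_le c (div_pos hc hr).le x₀)
    refine isThetaHolder_of_le_add hθ0.le hρ hC (c := c)
      (fun x y => abs_sub_le_of_nonneg_of_le (hh0 x) (min_le_right _ _) (hh0 y) (min_le_right _ _))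
      fun x y hxy => min_le_min_add_of_le (hloc x y hxy) (by positivity)
  refine ⟨fun x => u x + h x, hu.add hh, isSubaction_iff.2 ⟨hus.1.add (hh.continuous hθ0),
    fun x => ?_⟩, ?_⟩
  · rw [subactionGap_add_apply, sub_nonneg, sub_le_iff_le_add']
    exact min_le_min_add_of_le (reachCost_apply_le hT.surj hg hΦ0 x) (hg x)
  · have hhx₀ : h x₀ = c := min_eq_right hHx₀
    rw [subactionGap_add_apply, hhx₀]
    linarith [(min_le_left (H (T x₀)) c).trans hHTx₀]

theorem exists_isSubaction_subactionGap_pos_on (hT : IsExpandingTransitive T) (hθ0 : 0 < θ)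
    (hθ1 : θ ≤ 1) (hA : IsThetaHolder θ A) (hu : IsThetaHolder θ u)
    (hus : IsSubaction T A Abar u) {K : Set X} (hK : IsCompact K)
    (hKΩ : ∀ x ∈ K, x ∉ nonwanderingSet T A Abar) :
    ∃ w, IsThetaHolder θ w ∧ IsSubaction T A Abar w ∧
      ∀ x ∈ K, 0 < subactionGap T A Abar w x := by
  refine hK.induction_on (p := fun S => ∃ w, IsThetaHolder θ w ∧ IsSubaction T A Abar w ∧
    ∀ x ∈ S, 0 < subactionGap T A Abar w x) ⟨u, hu, hus, fun _ h => h.elim⟩ ?_ ?_ ?_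
  · rintro S S' hSS' ⟨w, hw, hws, hpos⟩
    exact ⟨w, hw, hws, fun x hx => hpos x (hSS' hx)⟩
  · rintro S S' ⟨w, hw, hws, hpos⟩ ⟨w', hw', hws', hpos'⟩
    exact ⟨_, (hw.const_mul _).add (hw'.const_mul _),
      hws.convexCombination hws' (t := 1 / 2) (by norm_num) (by norm_num),
      fun x hx => subactionGap_convexCombination_pos hws hws' (by norm_num) (by norm_num)
        (hx.imp (hpos x) (hpos' x))⟩
  · intro x hx
    obtain ⟨w, hw, hws, hpos⟩ :=
      exists_isSubaction_subactionGap_pos hT hθ0 hθ1 hA hu hus (hKΩ x hx)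
    have hopen : IsOpen {y | 0 < subactionGap T A Abar w y} :=
      isOpen_lt continuous_const (continuous_subactionGap hT.cont (hA.continuous hθ0) hws.1)
    exact ⟨_, mem_nhdsWithin_of_mem_nhds (hopen.mem_nhds hpos), w, hw, hws, fun y hy => hy⟩

end StrictSubaction

theorem subactions_contact_in_open_set_open_dense_general {X : Type*} [MetricSpace X] [CompactSpace X]
    (T : X → X) (hT : IsExpandingTransitive T)
    (θ : ℝ) (hθ0 : 0 < θ) (hθ1 : θ ≤ 1)
    (A : X → ℝ) (hA : IsThetaHolder θ A)
    (Abar : ℝ)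
    (D : Set X) (hD : IsOpen D) (hΩD : nonwanderingSet T A Abar ⊆ D) :
    (∀ u : X → ℝ, IsThetaHolder θ u → IsSubaction T A Abar u →
      contactLocus T A Abar u ⊆ D →
      ∃ ε : ℝ, 0 < ε ∧ ∀ v : X → ℝ, IsThetaHolder θ v → IsSubaction T A Abar v →
        holderNorm θ (fun x => v x - u x) < ε → contactLocus T A Abar v ⊆ D) ∧
    (∀ u : X → ℝ, IsThetaHolder θ u → IsSubaction T A Abar u →
      ∀ ε : ℝ, 0 < ε → ∃ v : X → ℝ, IsThetaHolder θ v ∧ IsSubaction T A Abar v ∧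
        contactLocus T A Abar v ⊆ D ∧ holderNorm θ (fun x => v x - u x) < ε) := by
  refine ⟨fun u _ hus huD => ?_, fun u hu hus ε hε => ?_⟩
  · obtain ⟨ε, hε, hsmall⟩ :=
      exists_contactLocus_subset_of_holderNorm_sub_lt θ hT.cont (hA.continuous hθ0) hus hD huD
    exact ⟨ε, hε, fun v _ hvs => hsmall v hvs.1⟩
  · obtain ⟨w, hw, hws, hpos⟩ := exists_isSubaction_subactionGap_pos_on hT hθ0 hθ1 hA hu hus
      hD.isClosed_compl.isCompact fun x hx hxΩ => hx (hΩD hxΩ)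
    exact exists_holderNorm_sub_lt_of_subactionGap_pos hu hus hw hws hpos hε

/-- for an open set `D ⊇ Ω(A)`, the set of θ-Hölder sub-actions
whose contact locus lies inside `D` is open and dense among the θ-Hölder
sub-actions for the θ-Hölder topology. -/
theorem subactions_contact_in_open_set_open_dense {X : Type*} [MetricSpace X] [CompactSpace X] [Nonempty X]
    [MeasurableSpace X] [BorelSpace X]
    (T : X → X) (hT : IsExpandingTransitive T)
    (θ : ℝ) (hθ0 : 0 < θ) (hθ1 : θ ≤ 1)
    (A : X → ℝ) (hA : IsThetaHolder θ A)
    (Abar : ℝ) (hAbar : IsErgMinValue T A Abar)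
    (D : Set X) (hD : IsOpen D) (hΩD : nonwanderingSet T A Abar ⊆ D) :
    (∀ u : X → ℝ, IsThetaHolder θ u → IsSubaction T A Abar u →
      contactLocus T A Abar u ⊆ D →
      ∃ ε : ℝ, 0 < ε ∧ ∀ v : X → ℝ, IsThetaHolder θ v → IsSubaction T A Abar v →
        holderNorm θ (fun x => v x - u x) < ε → contactLocus T A Abar v ⊆ D) ∧
    (∀ u : X → ℝ, IsThetaHolder θ u → IsSubaction T A Abar u →
      ∀ ε : ℝ, 0 < ε → ∃ v : X → ℝ, IsThetaHolder θ v ∧ IsSubaction T A Abar v ∧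
        contactLocus T A Abar v ⊆ D ∧ holderNorm θ (fun x => v x - u x) < ε) :=
  subactions_contact_in_open_set_open_dense_general T hT θ hθ0 hθ1 A hA Abar D hD hΩD
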